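/- For n > 1 and p ≥ 0, ∫_{-1}^{0} y^p · w_n(y) dy = (-1)^{n+p+1} · ((p+1)/(p+2)) · B_{n-1,p+1}. -/

import Mathlib

def stirling2 : ℕ → ℕ → ℕ
  | 0, 0 => 1
  | 0, _ + 1 => 0
  | _ + 1, 0 => 0
  | n + 1, k + 1 => (k + 1) * stirling2 n (k + 1) + stirling2 n k

def pBernoulli : ℕ → ℕ → ℚ
  | 0, _ => 1
  | n + 1, p => p * pBernoulli n p - ((p + 1 : ℚ) ^ 2 / (p + 2)) * pBernoulli n (p + 1)

/-- The geometric polynomials `w_n(y) = ∑_{k=0}^n S(n,k)·k!·y^k`. -/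
def geomPoly (n : ℕ) (y : ℝ) : ℝ :=
  ∑ k ∈ Finset.range (n + 1), (stirling2 n k : ℝ) * (Nat.factorial k : ℝ) * y ^ k

/-!
Write `J n p` for the integral. Expanding `w_n` gives
`J n p = ∑ k, S(n,k) k! (-1)^(p+k) / (p+k+1)`, and the Stirling recurrence
`S(n+1,k) = k S(n,k) + S(n,k-1)` turns this into `J (n+1) p = -(p+1) (J n (p+1) + J n p)`.
The recurrence of the p-Bernoulli numbers, weighted by `(p+1)/(p+2)`, shows that the right-hand
side obeys the same recurrence in `n`, and both sides agree at `n = 2`.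
-/

open Finset Nat

theorem stirling2_eq_stirlingSecond : stirling2 = stirlingSecond := by
  funext n k
  induction n generalizing k with
  | zero => cases k <;> rfl
  | succ n ih => cases k <;> simp [stirling2, stirlingSecond_succ_succ, ih]

theorem Nat.sum_stirlingSecond_succ_mul_factorial {R : Type*} [CommSemiring R] (n : ℕ)
    (f : ℕ → R) :
    ∑ k ∈ range (n + 2), (stirlingSecond (n + 1) k * k ! : R) * f k
      = ∑ k ∈ range (n + 1), (stirlingSecond n k * k ! : R) * (k * f k + (k + 1) * f (k + 1)) := by
  set g : ℕ → R := fun k ↦ k * stirlingSecond n k * k ! * f k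
  have hshift : ∑ k ∈ range (n + 1), g (k + 1) = ∑ k ∈ range (n + 1), g k := by
    have := (sum_range_succ' g (n + 1)).symm.trans (sum_range_succ g (n + 1))
    simpa [g, stirlingSecond_eq_zero_of_lt (lt_add_one n)] using this
  calc _ = ∑ k ∈ range (n + 1), (g (k + 1) + stirlingSecond n k * k ! * ((k + 1) * f (k + 1))) := by
        rw [sum_range_succ', stirlingSecond_succ_zero, cast_zero, zero_mul, zero_mul, add_zero]
        refine sum_congr rfl fun k _ ↦ ?_
        simp only [g, stirlingSecond_succ_succ, factorial_succ]
        push_cast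
        ring
    _ = _ := by
        rw [sum_add_distrib, hshift, ← sum_add_distrib]
        refine sum_congr rfl fun k _ ↦ ?_
        ring

theorem integral_neg_one_zero_pow (j : ℕ) : ∫ y in (-1 : ℝ)..0, y ^ j = (-1) ^ j / (j + 1) := by
  simp [integral_pow, pow_succ]

theorem integral_pow_mul_geomPoly_eq_sum (n p : ℕ) :
    ∫ y in (-1 : ℝ)..0, y ^ p * geomPoly n y
      = ∑ k ∈ range (n + 1), (stirlingSecond n k * k ! : ℝ) * ((-1) ^ (p + k) / (p + k + 1)) := by
  simp_rw [geomPoly, stirling2_eq_stirlingSecond, mul_sum, mul_left_comm _ (_ * _), ← pow_add]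
  rw [intervalIntegral.integral_finsetSum fun k _ ↦ (by fun_prop : Continuous _).intervalIntegrable _ _]
  simp_rw [intervalIntegral.integral_const_mul, integral_neg_one_zero_pow, cast_add]

theorem integral_pow_mul_geomPoly_succ (n p : ℕ) :
    ∫ y in (-1 : ℝ)..0, y ^ p * geomPoly (n + 1) y
      = -(p + 1) * ((∫ y in (-1 : ℝ)..0, y ^ (p + 1) * geomPoly n y)
          + ∫ y in (-1 : ℝ)..0, y ^ p * geomPoly n y) := by
  simp only [integral_pow_mul_geomPoly_eq_sum]
  rw [sum_stirlingSecond_succ_mul_factorial, ← sum_add_distrib, mul_sum]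
  refine sum_congr rfl fun k _ ↦ ?_
  push_cast
  field_simp
  ring

theorem pBernoulli_succ_mul (n q : ℕ) :
    (q / (q + 1) : ℚ) * pBernoulli (n + 1) q
      = q * (q / (q + 1) * pBernoulli n q - (q + 1) / (q + 2) * pBernoulli n (q + 1)) := by
  rw [pBernoulli]
  field_simp

theorem integral_pow_mul_geomPoly (n p : ℕ) (hn : 1 < n) :
    ∫ y in (-1 : ℝ)..0, y ^ p * geomPoly n y
      = (-1) ^ (n + p + 1) * ((p + 1 : ℝ) / (p + 2)) * (pBernoulli (n - 1) (p + 1) : ℝ) := by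
  induction n, hn using Nat.le_induction generalizing p with
  | base =>
    rw [integral_pow_mul_geomPoly_eq_sum]
    norm_num [sum_range_succ, stirlingSecond_succ_succ, pBernoulli]
    field_simp
    ring
  | succ n hn ih =>
    obtain ⟨m, rfl⟩ : ∃ m, n = m + 1 := ⟨n - 1, by omega⟩
    have hB := congrArg ((↑) : ℚ → ℝ) (pBernoulli_succ_mul m (p + 1))
    push_cast at hB
    rw [integral_pow_mul_geomPoly_succ, ih, ih]
    simp only [add_tsub_cancel_right]
    push_cast
    linear_combination (-1) ^ (m + p) * hB
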